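/- arXiv:2004.01679 — 3 statements merged into one kernel-verified Lean document; each statement's English description precedes it below -/
import Mathlib

section
/- Identification of the dual cone of ordered tuples of positive semidefinite matrices: For every integers D, K ≥ 1, the dual cone satisfies Ū_K^* = { x ∈ (S^D)^K : for every k ∈ {1,…,K}, Σ_{ℓ=k}^K x_ℓ ∈ S^D_+ }. Moreover, the bidual relation Ū_K = { v ∈ (S^D)^K : x·v ≥ 0 for every x ∈ Ū_K^* } holds. -/
/-!
Each step `(0, …, 0, b, …, b)` with `b ⪰ 0` lies in `Ū_K`, and pairing `x` with the step that
starts at position `k` gives `(∑_{ℓ ≥ k} x_ℓ) · b`; since `S^D_+` is self-dual, every tail sum of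
an `x ∈ Ū_K^*` is positive semidefinite. Conversely, peeling off the constant tuple
`(v_1, …, v_1)` gives
`x · v = (∑_ℓ x_ℓ) · v_1 + (x_2, …, x_K) · (v_2 - v_1, …, v_K - v_1)`,
where the last tuple lies in `Ū_{K-1}`, so induction on `K` puts every tuple with positive
semidefinite tail sums into `Ū_K^*`. For the bidual, test `v` against `e_k b` and
`e_j b - e_i b` with `i ≤ j` and `b ⪰ 0`: their tail sums are all `0` or `b`.
-/

noncomputable section

namespace SpinGlassStmt

/-- Index set for the coordinates of a symmetric `D × D` matrix. -/
def SIdx (D : ℕ) := {p : Fin D × Fin D // p.1 ≤ p.2}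

instance (D : ℕ) : Fintype (SIdx D) := by unfold SIdx; infer_instance
instance (D : ℕ) : DecidableEq (SIdx D) := by unfold SIdx; infer_instance

/-- Coordinates of an element of `S^D`. -/
abbrev Sym (D : ℕ) := SIdx D → ℝ

/-- The symmetric matrix associated with an element of `Sym D`. -/
def toMat {D : ℕ} (a : Sym D) : Matrix (Fin D) (Fin D) ℝ :=
  Matrix.of fun i j => if h : i ≤ j then a ⟨(i, j), h⟩ else a ⟨(j, i), le_of_lt (not_le.mp h)⟩

/-- Positive semidefiniteness, as a predicate on `Sym D`. -/
def PSD {D : ℕ} (a : Sym D) : Prop := (toMat a).PosSemidef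

/-- Trace (Frobenius) inner product `a · b = tr (a b)` on `S^D`. -/
def sdot {D : ℕ} (a b : Sym D) : ℝ :=
  ∑ i : Fin D, ∑ j : Fin D, toMat a i j * toMat b i j

/-- The space `(S^D)^K`. -/
abbrev EK (D K : ℕ) := Fin K → Sym D

/-- Inner product on `(S^D)^K`:  `x · y = ∑ k, x k · y k`. -/
def kdot {D K : ℕ} (x y : EK D K) : ℝ := ∑ k : Fin K, sdot (x k) (y k)

/-- The closed convex cone `Ū_K` of nondecreasing tuples of positive semidefinite
matrices. -/
def Ubar (D K : ℕ) : Set (EK D K) :=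
  {x | (∀ k, PSD (x k)) ∧ ∀ i j : Fin K, i ≤ j → PSD (x j - x i)}

/-- The dual cone `Ū_K^*`. -/
def Udual (D K : ℕ) : Set (EK D K) := {x | ∀ v ∈ Ubar D K, 0 ≤ kdot x v}

open Matrix Finset

open scoped MatrixOrder in
theorem _root_.Matrix.PosSemidef.trace_mul_nonneg {n : Type*} [Fintype n]
    {A B : Matrix n n ℝ} (hA : A.PosSemidef) (hB : B.PosSemidef) : 0 ≤ (A * B).trace := by
  classical
  obtain ⟨C, rfl⟩ := CStarAlgebra.nonneg_iff_eq_star_mul_self.mp hB.nonneg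
  rw [← Matrix.mul_assoc, trace_mul_comm, ← Matrix.mul_assoc, star_eq_conjTranspose]
  exact (hA.mul_mul_conjTranspose_same C).trace_nonneg

theorem _root_.Matrix.posSemidef_iff_forall_trace_mul_nonneg {n : Type*} [Fintype n]
    {A : Matrix n n ℝ} (hA : A.IsHermitian) :
    A.PosSemidef ↔ ∀ B : Matrix n n ℝ, B.PosSemidef → 0 ≤ (A * B).trace := by
  refine ⟨fun hA' B hB => hA'.trace_mul_nonneg hB, fun h => ?_⟩
  refine .of_dotProduct_mulVec_nonneg hA fun y => ?_
  have := h (vecMulVec y y) (by simpa using posSemidef_vecMulVec_self_star y)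
  rwa [mul_vecMulVec, trace_vecMulVec, dotProduct_comm] at this

section Tuples

variable {M : Type*} [AddCommMonoid M] {K : ℕ}

def tailSum (x : Fin K → M) (k : Fin K) : M := ∑ ℓ ∈ Ici k, x ℓ

def step (k : Fin K) (b : M) : Fin K → M := fun ℓ => if k ≤ ℓ then b else 0

theorem tailSum_single (j k : Fin K) (b : M) :
    tailSum (Pi.single j b) k = if k ≤ j then b else 0 := by
  simp [tailSum, Finset.sum_pi_single']

theorem tailSum_sub {G : Type*} [AddCommGroup G] (x y : Fin K → G) (k : Fin K) :
    tailSum (x - y) k = tailSum x k - tailSum y k :=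
  Finset.sum_sub_distrib _ _

theorem tailSum_zero {n : ℕ} (x : Fin (n + 1) → M) : tailSum x 0 = ∑ ℓ, x ℓ := by
  simp [tailSum]

theorem tailSum_succ {n : ℕ} (x : Fin (n + 1) → M) (k : Fin n) :
    tailSum x k.succ = tailSum (Fin.tail x) k :=
  Fin.sum_Ici_succ x k

end Tuples

section

variable {D K : ℕ}

theorem toMat_symm (a : Sym D) (i j : Fin D) : toMat a j i = toMat a i j := by
  rcases lt_trichotomy i j with h | rfl | h
  · simp [toMat, h.le, h.not_ge]
  · rfl
  · simp [toMat, h.le, h.not_ge]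

theorem toMat_isHermitian (a : Sym D) : (toMat a).IsHermitian :=
  IsHermitian.ext fun i j => (star_trivial _).trans (toMat_symm a i j)

def toMatₗ : Sym D →ₗ[ℝ] Matrix (Fin D) (Fin D) ℝ where
  toFun := toMat
  map_add' a b := by ext i j; simp only [toMat, Matrix.add_apply, of_apply]; split_ifs <;> rfl
  map_smul' c a := by
    ext i j; simp only [toMat, Matrix.smul_apply, RingHom.id_apply, of_apply]; split_ifs <;> rfl

theorem toMatₗ_apply (a : Sym D) : toMatₗ a = toMat a := rfl

def ofMat (M : Matrix (Fin D) (Fin D) ℝ) : Sym D := fun p => M p.1.1 p.1.2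

theorem toMat_ofMat {M : Matrix (Fin D) (Fin D) ℝ} (hM : M.IsHermitian) :
    toMat (ofMat M) = M := by
  ext i j
  by_cases h : i ≤ j
  · simp [toMat, ofMat, h]
  · simpa [toMat, ofMat, h] using hM.apply i j

theorem PSD.zero : PSD (0 : Sym D) := by
  simpa [PSD, ← toMatₗ_apply] using PosSemidef.zero

theorem sdot_eq_trace (a b : Sym D) : sdot a b = (toMat a * toMat b).trace := by
  simp only [sdot, trace, diag_apply, mul_apply, toMat_symm b]

def sdotₗ : Sym D →ₗ[ℝ] Sym D →ₗ[ℝ] ℝ :=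
  ((LinearMap.mul ℝ (Matrix (Fin D) (Fin D) ℝ)).compl₁₂ toMatₗ toMatₗ).compr₂
    (traceLinearMap (Fin D) ℝ ℝ)

theorem sdotₗ_apply (a b : Sym D) : sdotₗ a b = sdot a b := (sdot_eq_trace a b).symm

theorem sdot_comm (a b : Sym D) : sdot a b = sdot b a := by
  simp only [sdot, mul_comm]

theorem sdot_zero_left (b : Sym D) : sdot 0 b = 0 := by
  simp [← sdotₗ_apply]

theorem sdot_zero_right (a : Sym D) : sdot a 0 = 0 := by
  simp [← sdotₗ_apply]

theorem sdot_add_left (a a' b : Sym D) : sdot (a + a') b = sdot a b + sdot a' b := by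
  simp [← sdotₗ_apply]

theorem sdot_sub_left (a a' b : Sym D) : sdot (a - a') b = sdot a b - sdot a' b := by
  simp [← sdotₗ_apply]

theorem sdot_sub_right (a b b' : Sym D) : sdot a (b - b') = sdot a b - sdot a b' := by
  simp [← sdotₗ_apply]

theorem sdot_sum_left {ι : Type*} (s : Finset ι) (f : ι → Sym D) (b : Sym D) :
    sdot (∑ i ∈ s, f i) b = ∑ i ∈ s, sdot (f i) b := by
  simp [← sdotₗ_apply]

theorem PSD.sdot_nonneg {a b : Sym D} (ha : PSD a) (hb : PSD b) : 0 ≤ sdot a b := by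
  rw [sdot_eq_trace]
  exact PosSemidef.trace_mul_nonneg ha hb

theorem psd_iff_forall_sdot_nonneg {a : Sym D} : PSD a ↔ ∀ b, PSD b → 0 ≤ sdot a b := by
  rw [PSD, posSemidef_iff_forall_trace_mul_nonneg (toMat_isHermitian a)]
  refine ⟨fun h b hb => sdot_eq_trace a b ▸ h _ hb, fun h B hB => ?_⟩
  have hB' := toMat_ofMat hB.isHermitian
  simpa [sdot_eq_trace, hB'] using h (ofMat B) (by rwa [PSD, hB'])

theorem kdot_step (x : EK D K) (k : Fin K) (b : Sym D) :
    kdot x (step k b) = sdot (tailSum x k) b := by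
  simp [kdot, step, tailSum, apply_ite, sdot_zero_right, sdot_sum_left, Finset.sum_ite,
    Finset.filter_le_eq_Ici]

theorem kdot_single_left (k : Fin K) (b : Sym D) (v : EK D K) :
    kdot (Pi.single k b) v = sdot b (v k) := by
  rw [kdot, Fintype.sum_eq_single k fun ℓ hℓ => by simp [hℓ, sdot_zero_left]]
  simp

theorem kdot_sub_left (x y v : EK D K) : kdot (x - y) v = kdot x v - kdot y v := by
  simp [kdot, sdot_sub_left]

theorem PSD.ite {b : Sym D} (hb : PSD b) (p : Prop) [Decidable p] :
    PSD (if p then b else 0) := by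
  split_ifs
  exacts [hb, PSD.zero]

theorem PSD.ite_sub_ite {b : Sym D} (hb : PSD b) {p q : Prop} [Decidable p] [Decidable q]
    (hqp : q → p) : PSD ((if p then b else 0) - if q then b else 0) := by
  split_ifs with hp hq hq
  · simpa using PSD.zero
  · simpa using hb
  · exact absurd (hqp hq) hp
  · simpa using PSD.zero

theorem step_mem_Ubar (k : Fin K) {b : Sym D} (hb : PSD b) : step k b ∈ Ubar D K :=
  ⟨fun _ => hb.ite _, fun _ _ hij => hb.ite_sub_ite fun hk => hk.trans hij⟩

theorem shift_mem_Ubar {n : ℕ} {v : EK D (n + 1)} (hv : v ∈ Ubar D (n + 1)) :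
    (fun i : Fin n => v i.succ - v 0) ∈ Ubar D n := by
  refine ⟨fun i => hv.2 0 i.succ (Fin.zero_le _), fun i j hij => ?_⟩
  simpa using hv.2 i.succ j.succ (Fin.succ_le_succ_iff.mpr hij)

theorem kdot_eq_sdot_add_kdot_shift {n : ℕ} (x v : EK D (n + 1)) :
    kdot x v = sdot (∑ ℓ, x ℓ) (v 0) + kdot (Fin.tail x) (fun i => v i.succ - v 0) := by
  simp only [kdot, Fin.sum_univ_succ, sdot_add_left, sdot_sum_left, sdot_sub_right, Fin.tail,
    Finset.sum_sub_distrib]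
  ring

theorem kdot_nonneg_of_tailSum_psd {x v : EK D K} (hx : ∀ k, PSD (tailSum x k))
    (hv : v ∈ Ubar D K) : 0 ≤ kdot x v := by
  induction K with
  | zero => simp [kdot]
  | succ n ih =>
    rw [kdot_eq_sdot_add_kdot_shift]
    have hx' : ∀ k, PSD (tailSum (Fin.tail x) k) := fun k => tailSum_succ x k ▸ hx k.succ
    exact add_nonneg ((tailSum_zero x ▸ hx 0).sdot_nonneg (hv.1 0)) (ih hx' (shift_mem_Ubar hv))

theorem mem_Udual_iff {x : EK D K} : x ∈ Udual D K ↔ ∀ k, PSD (tailSum x k) := by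
  refine ⟨fun hx k => psd_iff_forall_sdot_nonneg.mpr fun b hb => ?_,
    fun hx v hv => kdot_nonneg_of_tailSum_psd hx hv⟩
  simpa [kdot_step] using hx _ (step_mem_Ubar k hb)

theorem mem_Ubar_of_forall_kdot_nonneg {v : EK D K}
    (hv : ∀ x : EK D K, (∀ k, PSD (tailSum x k)) → 0 ≤ kdot x v) : v ∈ Ubar D K := by
  refine ⟨fun k => psd_iff_forall_sdot_nonneg.mpr fun b hb => ?_,
    fun i j hij => psd_iff_forall_sdot_nonneg.mpr fun b hb => ?_⟩
  · have hx : ∀ m, PSD (tailSum (Pi.single k b) m) := fun m => by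
      simpa only [tailSum_single] using hb.ite _
    simpa [kdot_single_left, sdot_comm b] using hv _ hx
  · have hx : ∀ m, PSD (tailSum (Pi.single j b - Pi.single i b) m) := fun m => by
      simpa only [tailSum_sub, tailSum_single] using hb.ite_sub_ite fun hm => hm.trans hij
    simpa [kdot_sub_left, kdot_single_left, sdot_comm b, sdot_sub_left] using hv _ hx

end

theorem dual_cone_identification_general (D K : ℕ) :
    Udual D K = {x : EK D K | ∀ k : Fin K, PSD (∑ ℓ ∈ Finset.Ici k, x ℓ)} ∧
    Ubar D K = {v : EK D K | ∀ x ∈ Udual D K, 0 ≤ kdot x v} := by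
  refine ⟨Set.ext fun x => mem_Udual_iff, Set.ext fun v => ⟨fun hv x hx => hx v hv, fun hv => ?_⟩⟩
  exact mem_Ubar_of_forall_kdot_nonneg fun x hx => hv x (mem_Udual_iff.mpr hx)

/-- Identification of the dual cone `Ū_K^*` and the bidual
relation `Ū_K = (Ū_K^*)^*`. -/
theorem dual_cone_identification (D K : ℕ) (hD : 1 ≤ D) (hK : 1 ≤ K) :
    Udual D K = {x : EK D K | ∀ k : Fin K, PSD (∑ ℓ ∈ Finset.Ici k, x ℓ)} ∧
    Ubar D K = {v : EK D K | ∀ x ∈ Udual D K, 0 ≤ kdot x v} :=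
  dual_cone_identification_general D K

end SpinGlassStmt
end
end

section
/- Quantitative quantile discretization bound: Let μ be a Borel probability measure on ℝ₊ with finite second moment, let k ≥ 1 be an integer, and let F_μ^{-1}(r) := inf{ s ≥ 0 : μ([0,s]) ≥ r } for r ∈ [0,1]. Then ∫_0^1 | F_μ^{-1}(u) − k ∫_{⌊ku⌋/k}^{(⌊ku⌋+1)/k} F_μ^{-1}(v) dv | du ≤ 6 k^{-1/2} ( ∫_0^1 (F_μ^{-1}(u))² du )^{1/2}. In probabilistic terms, with U uniform on [0,1] and X_μ := F_μ^{-1}(U): the first Wasserstein distance between μ and its k-block quantile discretization is at most 6 k^{-1/2} (E[X_μ²])^{1/2}. -/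
/-!
On a block `(j/k, (j+1)/k)` on which `f` is monotone, replacing `f` by its average moves it in
`L¹` by at most `(f((j+1)/k) - f(j/k)) / k`. For the quantile function these oscillations telescope,
over all blocks but the last, to at most `F⁻¹((k-1)/k) / k`, and the Chebyshev-type bound
`F⁻¹(r)² (1 - r) ≤ ∫₀¹ (F⁻¹)²` turns this into `√(M/k)` with `M = ∫₀¹ (F⁻¹)²`. On the last
block, where `F⁻¹` may be unbounded, the error is at most twice the integral of `F⁻¹`, which
Cauchy–Schwarz bounds by `2√(M/k)`. Finally `M` is finite because `F⁻¹` pushes Lebesgue measure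
on `(0,1)` forward to `μ`.
-/

open MeasureTheory

noncomputable section

namespace SpinGlassStmt

def qf (μ : Measure ℝ) (r : ℝ) : ℝ :=
  sInf {s : ℝ | 0 ≤ s ∧ r ≤ (μ (Set.Icc 0 s)).toReal}

open ProbabilityTheory Set Filter Topology
open scoped ENNReal

section Average

variable {α : Type*} [MeasurableSpace α] {μ : Measure α} {s : Set α} {f : α → ℝ}

theorem setIntegral_abs_sub_setAverage_le_of_mapsTo_Icc {a b : ℝ} (hs : MeasurableSet s)
    (h0 : μ s ≠ 0) (hfin : μ s ≠ ∞) (hf : IntegrableOn f s μ) (hab : MapsTo f s (Icc a b)) :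
    ∫ x in s, |f x - (⨍ y in s, f y ∂μ)| ∂μ ≤ μ.real s * (b - a) := by
  have havg : ⨍ y in s, f y ∂μ ∈ Icc a b :=
    (convex_Icc a b).set_average_mem isClosed_Icc h0 hfin (ae_restrict_of_forall_mem hs hab) hf
  have hpt : ∀ x ∈ s, ‖|f x - (⨍ y in s, f y ∂μ)|‖ ≤ b - a := fun x hx => by
    rw [Real.norm_eq_abs, abs_abs, abs_sub_le_iff]
    constructor <;> linarith [(hab hx).1, (hab hx).2, havg.1, havg.2]
  calc _ ≤ ‖∫ x in s, |f x - (⨍ y in s, f y ∂μ)| ∂μ‖ := Real.le_norm_self _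
    _ ≤ (b - a) * μ.real s := norm_setIntegral_le_of_norm_le_const hfin.lt_top hpt
    _ = μ.real s * (b - a) := mul_comm _ _

theorem setIntegral_abs_sub_setAverage_le_two_mul (hs : MeasurableSet s) (hfin : μ s ≠ ∞)
    (hf : IntegrableOn f s μ) (hf0 : ∀ x ∈ s, 0 ≤ f x) :
    ∫ x in s, |f x - (⨍ y in s, f y ∂μ)| ∂μ ≤ 2 * ∫ x in s, f x ∂μ := by
  set c := ⨍ y in s, f y ∂μ with hc_def
  have hc : 0 ≤ c := by
    rw [hc_def, setAverage_eq, smul_eq_mul]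
    exact mul_nonneg (inv_nonneg.2 measureReal_nonneg) (setIntegral_nonneg hs hf0)
  have hconst : IntegrableOn (fun _ => c) s μ := integrableOn_const hfin
  calc ∫ x in s, |f x - c| ∂μ ≤ ∫ x in s, (f x + c) ∂μ :=
        setIntegral_mono_on (hf.sub hconst).abs (hf.add hconst) hs fun x hx => by
          rw [abs_sub_le_iff]; constructor <;> linarith [hf0 x hx]
    _ = 2 * ∫ x in s, f x ∂μ := by
      rw [integral_add hf hconst, setIntegral_const, measure_smul_setAverage f hfin]; ring

theorem sq_setIntegral_le_measureReal_mul (hfin : μ s ≠ ∞) (hf : IntegrableOn f s μ)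
    (hf2 : IntegrableOn (fun x => f x ^ 2) s μ) :
    (∫ x in s, f x ∂μ) ^ 2 ≤ μ.real s * ∫ x in s, f x ^ 2 ∂μ := by
  rcases eq_or_ne (μ s) 0 with h0 | h0
  · simp [Measure.restrict_eq_zero.2 h0]
  have hjensen := (even_two.convexOn_pow (𝕜 := ℝ)).map_set_average_le (continuousOn_pow 2)
    isClosed_univ h0 hfin (.of_forall fun _ => mem_univ _) hf hf2
  have hm : 0 < μ.real s := ENNReal.toReal_pos h0 hfin
  simp only [setAverage_eq, smul_eq_mul] at hjensen
  rw [mul_pow, inv_pow, sq (μ.real s)] at hjensen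
  have hscaled := mul_le_mul_of_nonneg_left hjensen (mul_nonneg hm.le hm.le)
  field_simp at hscaled
  linarith

theorem setIntegral_abs_sub_setAverage_le_two_mul_sqrt (hs : MeasurableSet s) (hfin : μ s ≠ ∞)
    (hf : IntegrableOn f s μ) (hf2 : IntegrableOn (fun x => f x ^ 2) s μ)
    (hf0 : ∀ x ∈ s, 0 ≤ f x) :
    ∫ x in s, |f x - (⨍ y in s, f y ∂μ)| ∂μ ≤ 2 * √(μ.real s * ∫ x in s, f x ^ 2 ∂μ) := by
  have hcs := Real.le_sqrt_of_sq_le (sq_setIntegral_le_measureReal_mul hfin hf hf2)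
  linarith [setIntegral_abs_sub_setAverage_le_two_mul hs hfin hf hf0]

end Average

section Quantile

variable {μ : Measure ℝ} {r s : ℝ}

theorem qf_nonneg (μ : Measure ℝ) (r : ℝ) : 0 ≤ qf μ r :=
  Real.sInf_nonneg fun _ hs => hs.1

variable [IsProbabilityMeasure μ]

theorem measureReal_Icc_zero_eq_cdf (hsupp : μ (Iio 0) = 0) (s : ℝ) :
    (μ (Icc 0 s)).toReal = cdf μ s := by
  rw [cdf_eq_real, measureReal_def, ← Ici_inter_Iic, inter_comm,
    measure_inter_conull (by rwa [compl_Ici])]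

theorem qf_eq_sInf_cdf (hsupp : μ (Iio 0) = 0) (r : ℝ) :
    qf μ r = sInf {s | 0 ≤ s ∧ r ≤ cdf μ s} := by
  simp only [qf, measureReal_Icc_zero_eq_cdf hsupp]

theorem le_cdf_qf (hsupp : μ (Iio 0) = 0) (hr : r < 1) : r ≤ cdf μ (qf μ r) := by
  rw [qf_eq_sInf_cdf hsupp]
  set S := {s | 0 ≤ s ∧ r ≤ cdf μ s}
  have hne : S.Nonempty :=
    ((eventually_ge_atTop 0).and ((tendsto_cdf_atTop μ).eventually_const_le hr)).exists
  have hright : ∀ᶠ x in 𝓝[>] sInf S, r ≤ cdf μ x :=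
    eventually_nhdsWithin_of_forall fun x hx => by
      obtain ⟨s, hs, hsx⟩ := exists_lt_of_csInf_lt hne hx
      exact hs.2.trans ((cdf μ).mono hsx.le)
  exact ge_of_tendsto (((cdf μ).right_continuous _).mono Ioi_subset_Ici_self) hright

theorem qf_le_of_le_cdf (hsupp : μ (Iio 0) = 0) (hs : 0 ≤ s) (h : r ≤ cdf μ s) : qf μ r ≤ s := by
  rw [qf_eq_sInf_cdf hsupp]
  exact csInf_le ⟨0, fun _ h => h.1⟩ ⟨hs, h⟩

theorem qf_le_iff (hsupp : μ (Iio 0) = 0) (hr : r ∈ Ioo 0 1) : qf μ r ≤ s ↔ r ≤ cdf μ s := by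
  rcases lt_or_ge s 0 with hs | hs
  · have hcdf : cdf μ s = 0 := by
      rw [← measureReal_Icc_zero_eq_cdf hsupp, Icc_eq_empty hs.not_ge, measure_empty,
        ENNReal.toReal_zero]
    exact iff_of_false (hs.trans_le (qf_nonneg μ r)).not_ge (hcdf ▸ hr.1.not_ge)
  · exact ⟨fun h => (le_cdf_qf hsupp hr.2).trans ((cdf μ).mono h), qf_le_of_le_cdf hsupp hs⟩

theorem qf_monotoneOn (hsupp : μ (Iio 0) = 0) : MonotoneOn (qf μ) (Iio 1) :=
  fun _ _ _ hr' h => qf_le_of_le_cdf hsupp (qf_nonneg μ _) (h.trans (le_cdf_qf hsupp hr'))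

theorem aemeasurable_qf (hsupp : μ (Iio 0) = 0) :
    AEMeasurable (qf μ) (volume.restrict (Ioo 0 1)) :=
  aemeasurable_restrict_of_monotoneOn measurableSet_Ioo
    ((qf_monotoneOn hsupp).mono Ioo_subset_Iio_self)

theorem volume_Ioo_zero_one_inter_Iic {c : ℝ} (hc : c ≤ 1) :
    volume (Ioo 0 1 ∩ Iic c) = ENNReal.ofReal c := by
  refine le_antisymm ?_ ?_
  · calc volume (Ioo 0 1 ∩ Iic c) ≤ volume (Ioc 0 c) :=
          measure_mono fun u hu => ⟨hu.1.1, hu.2⟩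
      _ = ENNReal.ofReal c := by rw [Real.volume_Ioc, sub_zero]
  · calc ENNReal.ofReal c = volume (Ioo 0 c) := by rw [Real.volume_Ioo, sub_zero]
      _ ≤ volume (Ioo 0 1 ∩ Iic c) :=
          measure_mono fun u hu => ⟨⟨hu.1, hu.2.trans_le hc⟩, hu.2.le⟩

theorem map_qf_volume_restrict_Ioo (hsupp : μ (Iio 0) = 0) :
    (volume.restrict (Ioo 0 1)).map (qf μ) = μ := by
  have : IsProbabilityMeasure (volume.restrict (Ioo (0 : ℝ) 1)) :=
    ⟨by simp [Real.volume_Ioo]⟩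
  have := Measure.isProbabilityMeasure_map (aemeasurable_qf (μ := μ) hsupp)
  refine Measure.ext_of_Iic _ _ fun s => ?_
  have hpre : qf μ ⁻¹' Iic s ∩ Ioo 0 1 = Ioo 0 1 ∩ Iic (cdf μ s) := by
    ext u
    simp only [mem_inter_iff, mem_preimage, mem_Iic]
    exact ⟨fun h => ⟨h.2, (qf_le_iff hsupp h.2).1 h.1⟩,
      fun h => ⟨(qf_le_iff hsupp h.1).2 h.2, h.1⟩⟩
  rw [Measure.map_apply_of_aemeasurable (aemeasurable_qf hsupp) measurableSet_Iic,
    Measure.restrict_apply' measurableSet_Ioo, hpre,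
    volume_Ioo_zero_one_inter_Iic (cdf_le_one μ s), ofReal_cdf]

theorem integrableOn_qf_sq (hsupp : μ (Iio 0) = 0) (hmom : Integrable (fun x => x ^ 2) μ) :
    IntegrableOn (fun u => qf μ u ^ 2) (Ioo 0 1) := by
  rw [← map_qf_volume_restrict_Ioo hsupp] at hmom
  exact (integrable_map_measure (by fun_prop) (aemeasurable_qf hsupp)).1 hmom

end Quantile

section Blocks

variable {k j : ℕ} {f g : ℝ → ℝ}

abbrev block (k j : ℕ) : Set ℝ := Ioo ((j : ℝ) / k) ((j + 1) / k)

def blockAverage (k : ℕ) (f : ℝ → ℝ) (u : ℝ) : ℝ :=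
  k * ∫ v in Ioo ((⌊(k : ℝ) * u⌋ : ℝ) / k) (((⌊(k : ℝ) * u⌋ : ℝ) + 1) / k), f v

theorem block_left_le_right (k j : ℕ) : (j : ℝ) / k ≤ (j + 1) / k := by
  gcongr; linarith

theorem volume_real_block (hk : 0 < k) (j : ℕ) : volume.real (block k j) = 1 / k := by
  rw [Real.volume_real_Ioo_of_le (block_left_le_right k j)]
  field_simp
  ring

theorem volume_block_ne_zero (hk : 0 < k) (j : ℕ) : volume (block k j) ≠ 0 :=
  isOpen_Ioo.measure_ne_zero volume (nonempty_Ioo.2 (by gcongr; linarith))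

theorem block_subset_Ioo_zero_one (hj : j < k) : block k j ⊆ Ioo 0 1 := by
  have hk : (0 : ℝ) < k := by exact_mod_cast j.zero_le.trans_lt hj
  refine Ioo_subset_Ioo (by positivity) ?_
  rw [div_le_one hk]
  exact_mod_cast hj

theorem blockAverage_eq_setAverage (hk : 0 < k) {u : ℝ} (hu : u ∈ block k j) :
    blockAverage k f u = ⨍ v in block k j, f v := by
  have hk' : (0 : ℝ) < k := by exact_mod_cast hk
  have hfloor : ⌊(k : ℝ) * u⌋ = j := by
    rw [mem_Ioo, div_lt_iff₀ hk', lt_div_iff₀ hk'] at hu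
    rw [Int.floor_eq_iff]
    push_cast
    constructor <;> linarith
  rw [blockAverage, hfloor, setAverage_eq, volume_real_block hk, smul_eq_mul]
  push_cast
  rw [one_div, inv_inv]

theorem setIntegral_Ioo_zero_one_eq_sum_block (hk : 0 < k)
    (hg : ∀ j < k, IntegrableOn g (block k j)) :
    ∫ u in Ioo 0 1, g u = ∑ j ∈ Finset.range k, ∫ u in block k j, g u := by
  have hk' : (0 : ℝ) < k := by exact_mod_cast hk
  have hsum := intervalIntegral.sum_integral_adjacent_intervals (μ := volume) (f := g)
    (a := fun j : ℕ => (j : ℝ) / k) fun j hj => by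
      simpa only [Nat.cast_succ] using
        (intervalIntegrable_iff_integrableOn_Ioo_of_le (block_left_le_right k j)).2 (hg j hj)
  simp only [Nat.cast_zero, zero_div, div_self hk'.ne', Nat.cast_succ] at hsum
  rw [← integral_Ioc_eq_integral_Ioo, ← intervalIntegral.integral_of_le zero_le_one, ← hsum]
  refine Finset.sum_congr rfl fun j _ => ?_
  rw [intervalIntegral.integral_of_le (block_left_le_right k j), integral_Ioc_eq_integral_Ioo]

end Blocks

section Monotone

variable {f : ℝ → ℝ} {k : ℕ}

theorem integrableOn_Ioo_zero_one_of_monotoneOn (hmono : MonotoneOn f (Ico 0 1))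
    (hf2 : IntegrableOn (fun u => f u ^ 2) (Ioo 0 1)) : IntegrableOn f (Ioo 0 1) :=
  have hmeas := (aemeasurable_restrict_of_monotoneOn measurableSet_Ioo
    (hmono.mono Ioo_subset_Ico_self)).aestronglyMeasurable
  ((memLp_two_iff_integrable_sq hmeas).2 hf2).integrable one_le_two

theorem sq_mul_one_sub_le_setIntegral_sq (hmono : MonotoneOn f (Ico 0 1)) (h0 : 0 ≤ f 0)
    (hf2 : IntegrableOn (fun u => f u ^ 2) (Ioo 0 1)) {r : ℝ} (hr : r ∈ Ico 0 1) :
    f r ^ 2 * (1 - r) ≤ ∫ u in Ioo 0 1, f u ^ 2 := by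
  have hfr : 0 ≤ f r := h0.trans (hmono (left_mem_Ico.2 zero_lt_one) hr hr.1)
  have hsub : Ioo r 1 ⊆ Ioo 0 1 := Ioo_subset_Ioo_left hr.1
  calc f r ^ 2 * (1 - r) = ∫ _ in Ioo r 1, f r ^ 2 := by
        rw [setIntegral_const, Real.volume_real_Ioo_of_le hr.2.le, smul_eq_mul, mul_comm]
    _ ≤ ∫ u in Ioo r 1, f u ^ 2 :=
        setIntegral_mono_on (integrableOn_const measure_Ioo_lt_top.ne) (hf2.mono_set hsub)
          measurableSet_Ioo fun u hu =>
            pow_le_pow_left₀ hfr (hmono hr ⟨hr.1.trans hu.1.le, hu.2⟩ hu.1.le) 2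
    _ ≤ ∫ u in Ioo 0 1, f u ^ 2 :=
        setIntegral_mono_set hf2 (.of_forall fun _ => sq_nonneg _) hsub.eventuallyLE

theorem setIntegral_abs_sub_setAverage_block_le (hmono : MonotoneOn f (Ico 0 1))
    (hf : IntegrableOn f (Ioo 0 1)) {j : ℕ} (hj : j + 1 < k) :
    ∫ u in block k j, |f u - (⨍ v in block k j, f v)| ≤ (f ((j + 1) / k) - f (j / k)) / k := by
  have hk : 0 < k := by omega
  have hmem : ∀ x, (j : ℝ) / k ≤ x → x ≤ (j + 1) / k → x ∈ Ico 0 1 := fun x h1 h2 =>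
    ⟨(by positivity : (0 : ℝ) ≤ j / k).trans h1, h2.trans_lt <| by
      rw [div_lt_one (by exact_mod_cast hk)]; exact_mod_cast hj⟩
  have hleft := hmem _ le_rfl (block_left_le_right k j)
  have hright := hmem _ (block_left_le_right k j) le_rfl
  calc _ ≤ volume.real (block k j) * (f ((j + 1) / k) - f (j / k)) :=
        setIntegral_abs_sub_setAverage_le_of_mapsTo_Icc measurableSet_Ioo
          (volume_block_ne_zero hk j) measure_Ioo_lt_top.ne
          (hf.mono_set (block_subset_Ioo_zero_one (by omega))) fun u hu =>
            ⟨hmono hleft (hmem u hu.1.le hu.2.le) hu.1.le,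
              hmono (hmem u hu.1.le hu.2.le) hright hu.2.le⟩
    _ = _ := by rw [volume_real_block hk]; ring

theorem sum_setIntegral_abs_sub_setAverage_block_le (hmono : MonotoneOn f (Ico 0 1))
    (hf : IntegrableOn f (Ioo 0 1)) {m : ℕ} (hm : m < k) :
    ∑ j ∈ Finset.range m, ∫ u in block k j, |f u - (⨍ v in block k j, f v)|
      ≤ (f (m / k) - f 0) / k := by
  induction m with
  | zero => simp
  | succ m ih =>
    rw [Finset.sum_range_succ]
    calc _ ≤ (f (m / k) - f 0) / k + (f ((m + 1) / k) - f (m / k)) / k :=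
          add_le_add (ih (by omega)) (setIntegral_abs_sub_setAverage_block_le hmono hf hm)
      _ = _ := by push_cast; ring

theorem integral_abs_sub_blockAverage_le (hmono : MonotoneOn f (Ico 0 1)) (h0 : 0 ≤ f 0)
    (hf2 : IntegrableOn (fun u => f u ^ 2) (Ioo 0 1)) (hk : 0 < k) :
    ∫ u in Ioo 0 1, |f u - blockAverage k f u| ≤ 3 * √((∫ u in Ioo 0 1, f u ^ 2) / k) := by
  set M := ∫ u in Ioo 0 1, f u ^ 2
  have hf := integrableOn_Ioo_zero_one_of_monotoneOn hmono hf2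
  have hblock : ∀ j, EqOn (fun u => |f u - blockAverage k f u|)
      (fun u => |f u - ⨍ v in block k j, f v|) (block k j) := fun j u hu => by
    simp only [blockAverage_eq_setAverage hk hu]
  rw [setIntegral_Ioo_zero_one_eq_sum_block hk fun j hj =>
      IntegrableOn.congr_fun ((hf.mono_set (block_subset_Ioo_zero_one hj)).sub
        (integrableOn_const measure_Ioo_lt_top.ne)).abs (hblock j).symm measurableSet_Ioo,
    Finset.sum_congr rfl fun j _ => setIntegral_congr_fun measurableSet_Ioo (hblock j)]
  obtain ⟨m, rfl⟩ := Nat.exists_eq_add_one_of_ne_zero hk.ne'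
  rw [Finset.sum_range_succ]
  have hk' : (0 : ℝ) < (m + 1 : ℕ) := by positivity
  have hlast_sub : block (m + 1) m ⊆ Ioo 0 1 := block_subset_Ioo_zero_one (lt_add_one m)
  have htail : f (m / (m + 1 : ℕ)) / (m + 1 : ℕ) ≤ √(M / (m + 1 : ℕ)) := by
    have hr : (m : ℝ) / (m + 1 : ℕ) ∈ Ico 0 1 :=
      ⟨by positivity, by rw [div_lt_one hk']; exact_mod_cast lt_add_one m⟩
    refine Real.le_sqrt_of_sq_le ?_
    calc (f (m / (m + 1 : ℕ)) / (m + 1 : ℕ)) ^ 2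
        = f (m / (m + 1 : ℕ)) ^ 2 * (1 - m / (m + 1 : ℕ)) / (m + 1 : ℕ) := by
          field_simp; push_cast; ring
      _ ≤ M / (m + 1 : ℕ) := by
          gcongr; exact sq_mul_one_sub_le_setIntegral_sq hmono h0 hf2 hr
  have hlast : √(volume.real (block (m + 1) m) * ∫ u in block (m + 1) m, f u ^ 2)
      ≤ √(M / (m + 1 : ℕ)) := by
    rw [volume_real_block hk, one_div_mul_eq_div]
    gcongr
    exact setIntegral_mono_set hf2 (.of_forall fun _ => sq_nonneg _) hlast_sub.eventuallyLE
  have hsum := sum_setIntegral_abs_sub_setAverage_block_le hmono hf (lt_add_one m)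
  have hlast_block := setIntegral_abs_sub_setAverage_le_two_mul_sqrt measurableSet_Ioo
    measure_Ioo_lt_top.ne (hf.mono_set hlast_sub) (hf2.mono_set hlast_sub) fun u hu =>
      h0.trans (hmono (left_mem_Ico.2 zero_lt_one) (Ioo_subset_Ico_self (hlast_sub hu))
        (hlast_sub hu).1.le)
  have hf0 : 0 ≤ f 0 / (m + 1 : ℕ) := by positivity
  linarith [sub_div (f (m / (m + 1 : ℕ))) (f 0) (m + 1 : ℕ)]

end Monotone

/-- For a Borel probability measure `μ` on `ℝ₊` with finite
second moment and every integer `k ≥ 1`,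
`∫₀¹ |F_μ^{-1}(u) - k ∫_{⌊ku⌋/k}^{(⌊ku⌋+1)/k} F_μ^{-1}(v) dv| du
  ≤ 6 k^{-1/2} (∫₀¹ (F_μ^{-1})² )^{1/2}`. -/
theorem quantile_discretization_bound
    (μ : Measure ℝ) (hμ : IsProbabilityMeasure μ)
    (hsupp : μ (Set.Iio 0) = 0)
    (hmom : Integrable (fun x => x ^ 2) μ)
    (k : ℕ) (hk : 1 ≤ k) :
    (∫ u in Set.Ioo (0:ℝ) 1,
        |qf μ u - (k : ℝ) * ∫ v in Set.Ioo ((⌊(k : ℝ) * u⌋ : ℝ) / k)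
            (((⌊(k : ℝ) * u⌋ : ℝ) + 1) / k), qf μ v|)
      ≤ 6 / Real.sqrt k * Real.sqrt (∫ u in Set.Ioo (0:ℝ) 1, (qf μ u) ^ 2) := by
  set M := ∫ u in Ioo (0 : ℝ) 1, qf μ u ^ 2
  have hM : 0 ≤ √M / √k := by positivity
  calc _ ≤ 3 * √(M / k) :=
        integral_abs_sub_blockAverage_le ((qf_monotoneOn hsupp).mono Ico_subset_Iio_self)
          (qf_nonneg μ 0) (integrableOn_qf_sq hsupp hmom) hk
    _ = 3 * (√M / √k) := by rw [Real.sqrt_div' _ k.cast_nonneg]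
    _ ≤ 6 / √k * √M := by rw [div_mul_eq_mul_div, mul_div_assoc]; linarith

end SpinGlassStmt
end
end

section
/- Block-averaging bound for nondecreasing nonnegative tuples: Let K, R ≥ 1 be integers, set K' := RK, and let x = (x_1,…,x_{K'}) ∈ ℝ₊^{K'} be nondecreasing (x_j ≤ x_{j+1} for all j). For k ∈ {1,…,K} let m_k := (1/R) Σ_{r=1}^R x_{(k−1)R+r} be the k-th block average, and set |x|₂ := ( (1/K') Σ_{j=1}^{K'} x_j² )^{1/2}. Then (1/K') Σ_{j=1}^{K'} | x_j − m_{⌈j/R⌉} | ≤ 3 |x|₂ K^{-1/2}. -/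
/-!
Within a block all entries and the block mean lie between the first entry of the block and the
first entry of the next one, so for every block but the last the deviations sum to at most
`R` times that increment; these telescope to `R · x_{(K-1)R}`. The last block contributes at most
twice its sum. Both quantities are at most `√(R ∑ x_j²)`: the first because `x_{(K-1)R}` is below
every entry of the last block, the second by Cauchy–Schwarz. Dividing `3 √(R ∑ x_j²)` by `RK`
gives the bound.
-/

noncomputable section

namespace SpinGlassStmt

open Finset

theorem sum_range_mul_eq_sum_sum {M : Type*} [AddCommMonoid M] (f : ℕ → M) (R K : ℕ) :
    ∑ j ∈ range (R * K), f j = ∑ b ∈ range K, ∑ r ∈ range R, f (b * R + r) := by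
  induction K with
  | zero => simp
  | succ K ih =>
    rw [Nat.mul_succ, sum_range_add, ih, sum_range_succ, mul_comm R K]

section Deviation

variable {ι : Type*} {s : Finset ι} {y : ι → ℝ}

theorem sum_abs_sub_le_card_mul_of_mem_Icc {a b c : ℝ} (hy : ∀ i ∈ s, y i ∈ Set.Icc a b)
    (hc : c ∈ Set.Icc a b) : ∑ i ∈ s, |y i - c| ≤ #s * (b - a) := by
  rw [← nsmul_eq_mul]
  refine sum_le_card_nsmul _ _ _ fun i hi => abs_sub_le_iff.2 ⟨?_, ?_⟩ <;>
    linarith [(hy i hi).1, (hy i hi).2, hc.1, hc.2]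

theorem sum_abs_sub_le_sum_add_card_mul {c : ℝ} (hy : ∀ i ∈ s, 0 ≤ y i) (hc : 0 ≤ c) :
    ∑ i ∈ s, |y i - c| ≤ ∑ i ∈ s, y i + #s * c := by
  rw [← nsmul_eq_mul, ← sum_const, ← sum_add_distrib]
  exact sum_le_sum fun i hi => abs_sub_le_iff.2 ⟨by linarith [hy i hi], by linarith [hy i hi]⟩

theorem sum_le_sqrt_card_mul_sum_sq : ∑ i ∈ s, y i ≤ √(#s * ∑ i ∈ s, y i ^ 2) :=
  (le_abs_self _).trans (Real.abs_le_sqrt (sq_sum_le_card_mul_sum_sq ..))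

theorem card_mul_le_sqrt_card_mul_sum_sq {L : ℝ} (hL : 0 ≤ L) (hy : ∀ i ∈ s, L ≤ y i) :
    #s * L ≤ √(#s * ∑ i ∈ s, y i ^ 2) := by
  calc #s * L = ∑ _i ∈ s, L := by rw [sum_const, nsmul_eq_mul]
    _ ≤ √(#s * ∑ _i ∈ s, L ^ 2) := sum_le_sqrt_card_mul_sum_sq
    _ ≤ √(#s * ∑ i ∈ s, y i ^ 2) := by
      gcongr with i hi
      exact hy i hi

end Deviation

def blockMean (x : ℕ → ℝ) (R b : ℕ) : ℝ := (1 / (R : ℝ)) * ∑ r ∈ range R, x (b * R + r)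

section Blocks

variable {x : ℕ → ℝ} {R : ℕ}

theorem sum_abs_sub_blockMean_eq_sum_blocks (hR : 0 < R) (K : ℕ) :
    ∑ j ∈ range (R * K), |x j - blockMean x R (j / R)|
      = ∑ b ∈ range K, ∑ r ∈ range R, |x (b * R + r) - blockMean x R b| := by
  rw [sum_range_mul_eq_sum_sum]
  refine sum_congr rfl fun b _ => sum_congr rfl fun r hr => ?_
  rw [Nat.add_comm, Nat.add_mul_div_right _ _ hR, Nat.div_eq_of_lt (mem_range.1 hr), zero_add]

theorem blockMean_mem_Icc (hR : 0 < R) {b : ℕ} {lo hi : ℝ}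
    (hx : ∀ r < R, x (b * R + r) ∈ Set.Icc lo hi) : blockMean x R b ∈ Set.Icc lo hi := by
  have hR' : (0 : ℝ) < R := Nat.cast_pos.2 hR
  have hlo : R • lo ≤ ∑ r ∈ range R, x (b * R + r) := by
    simpa using card_nsmul_le_sum (range R) _ lo fun r hr => (hx r (mem_range.1 hr)).1
  have hhi : ∑ r ∈ range R, x (b * R + r) ≤ R • hi := by
    simpa using sum_le_card_nsmul (range R) _ hi fun r hr => (hx r (mem_range.1 hr)).2
  rw [nsmul_eq_mul] at hlo hhi
  rw [blockMean, one_div_mul_eq_div]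
  exact ⟨(le_div_iff₀' hR').2 hlo, (div_le_iff₀' hR').2 hhi⟩

theorem sum_abs_sub_blockMean_le_of_mem_Icc (hR : 0 < R) {b : ℕ} {lo hi : ℝ}
    (hx : ∀ r < R, x (b * R + r) ∈ Set.Icc lo hi) :
    ∑ r ∈ range R, |x (b * R + r) - blockMean x R b| ≤ R * (hi - lo) := by
  simpa using sum_abs_sub_le_card_mul_of_mem_Icc (fun r hr => hx r (mem_range.1 hr))
    (blockMean_mem_Icc hR hx)

theorem sum_abs_sub_blockMean_le_two_mul_sum (hR : 0 < R) {b : ℕ}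
    (hx : ∀ r < R, 0 ≤ x (b * R + r)) :
    ∑ r ∈ range R, |x (b * R + r) - blockMean x R b| ≤ 2 * ∑ r ∈ range R, x (b * R + r) := by
  have hmean : 0 ≤ blockMean x R b :=
    mul_nonneg (by positivity) (sum_nonneg fun r hr => hx r (mem_range.1 hr))
  have h := sum_abs_sub_le_sum_add_card_mul (fun r hr => hx r (mem_range.1 hr)) hmean
  have hsum : (R : ℝ) * blockMean x R b = ∑ r ∈ range R, x (b * R + r) := by
    rw [blockMean, ← mul_assoc, mul_one_div_cancel (Nat.cast_ne_zero.2 hR.ne'), one_mul]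
  rw [card_range, hsum] at h
  linarith

theorem sum_blocks_abs_sub_blockMean_le (hR : 0 < R) (n : ℕ)
    (hnn : ∀ j < R * (n + 1), 0 ≤ x j) (hmono : MonotoneOn x (Set.Iio (R * (n + 1)))) :
    ∑ b ∈ range (n + 1), ∑ r ∈ range R, |x (b * R + r) - blockMean x R b|
      ≤ R * x (n * R) + 2 * ∑ r ∈ range R, x (n * R + r) := by
  have hinner : ∀ b ∈ range n, ∑ r ∈ range R, |x (b * R + r) - blockMean x R b|
      ≤ R * (x ((b + 1) * R) - x (b * R)) := by
    intro b hb
    have hnext : (b + 1) * R < R * (n + 1) := by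
      rw [mul_comm R]; exact Nat.mul_lt_mul_of_pos_right (by simpa using hb) hR
    refine sum_abs_sub_blockMean_le_of_mem_Icc hR fun r hr => ⟨?_, ?_⟩
    · exact hmono (by simp; nlinarith) (by simp; nlinarith) (by omega)
    · exact hmono (by simp; nlinarith) hnext (by nlinarith)
  have hlast := sum_abs_sub_blockMean_le_two_mul_sum hR (b := n) fun r hr =>
    hnn _ (by nlinarith)
  have htelescope : ∑ b ∈ range n, (R : ℝ) * (x ((b + 1) * R) - x (b * R))
      = R * (x (n * R) - x 0) := by
    rw [← mul_sum, sum_range_sub (fun b => x (b * R)), zero_mul]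
  have hx0 : 0 ≤ (R : ℝ) * x 0 := mul_nonneg (Nat.cast_nonneg R) (hnn 0 (by positivity))
  rw [sum_range_succ]
  linarith [sum_le_sum hinner]

end Blocks

theorem one_div_mul_sqrt_mul_eq_sqrt_div_sqrt {R K : ℝ} (hR : 0 < R) (hK : 0 < K) (T : ℝ) :
    (1 / (R * K)) * √(R * T) = √((1 / (R * K)) * T) / √K := by
  have hRK : (1 / (R * K)) * T = (R * T) / (R * √K) ^ 2 := by
    rw [mul_pow, Real.sq_sqrt hK.le]; field_simp
  rw [hRK, Real.sqrt_div' _ (by positivity), Real.sqrt_sq (by positivity), div_div, mul_assoc,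
    Real.mul_self_sqrt hK.le]
  ring

/-- Let `K, R ≥ 1`, `K' = RK`, and let `x` be a nonnegative
nondecreasing tuple of length `K'` (indexed here from `0`, so block `b` of the
informal statement, `1 ≤ b ≤ K`, corresponds to indices `j` with `j / R = b-1`).
With `m_b = (1/R) ∑_{r<R} x_{bR+r}` the block averages and
`|x|₂ = ((1/K') ∑_j x_j²)^{1/2}`, one has
`(1/K') ∑_j |x_j - m_{j/R}| ≤ 3 |x|₂ K^{-1/2}`. -/
theorem block_averaging_bound
    (K R : ℕ) (hK : 1 ≤ K) (hR : 1 ≤ R) (x : ℕ → ℝ)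
    (hnn : ∀ j < R * K, 0 ≤ x j)
    (hmono : ∀ i j : ℕ, i ≤ j → j < R * K → x i ≤ x j) :
    (1 / (R * K : ℝ)) * ∑ j ∈ Finset.range (R * K),
        |x j - (1 / (R : ℝ)) * ∑ r ∈ Finset.range R, x ((j / R) * R + r)|
      ≤ 3 * Real.sqrt ((1 / (R * K : ℝ)) * ∑ j ∈ Finset.range (R * K), (x j) ^ 2)
          / Real.sqrt K := by
  obtain ⟨n, rfl⟩ : ∃ n, K = n + 1 := ⟨K - 1, by omega⟩
  set T := ∑ j ∈ range (R * (n + 1)), x j ^ 2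
  have hlastT : ∑ r ∈ range R, x (n * R + r) ^ 2 ≤ T := by
    rw [show T = _ from sum_range_mul_eq_sum_sum (x · ^ 2) R (n + 1), sum_range_succ]
    exact le_add_of_nonneg_left (sum_nonneg fun _ _ => sum_nonneg fun _ _ => sq_nonneg _)
  have hfirst : R * x (n * R) ≤ √(R * T) := by
    refine (card_range R ▸ card_mul_le_sqrt_card_mul_sum_sq (hnn _ (by nlinarith))
      fun r hr => hmono (n * R) (n * R + r) (by omega) (by simp at hr; nlinarith)).trans ?_
    gcongr
  have hlast : ∑ r ∈ range R, x (n * R + r) ≤ √(R * T) :=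
    (card_range R ▸ sum_le_sqrt_card_mul_sum_sq).trans (by gcongr)
  have hblocks := sum_blocks_abs_sub_blockMean_le hR n hnn
    fun i hi j hj hij => hmono i j hij hj
  calc (1 / (R * (n + 1 : ℕ) : ℝ)) * ∑ j ∈ range (R * (n + 1)), |x j - blockMean x R (j / R)|
      = (1 / (R * (n + 1 : ℕ) : ℝ)) * ∑ b ∈ range (n + 1), ∑ r ∈ range R,
          |x (b * R + r) - blockMean x R b| := by
        rw [sum_abs_sub_blockMean_eq_sum_blocks hR]
    _ ≤ (1 / (R * (n + 1 : ℕ) : ℝ)) * (3 * √(R * T)) := by gcongr; linarith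
    _ = _ := by
        rw [mul_left_comm, one_div_mul_sqrt_mul_eq_sqrt_div_sqrt (by positivity) (by positivity),
          mul_div_assoc]

end SpinGlassStmt
end
end
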